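/- arXiv:0805.1563 — 2 statements merged into one kernel-verified Lean document; each statement's English description precedes it below -/
import Mathlib

section
/- Let S be a finite state space, α ∈ (0,1), and let T denote the Bellman operator of a finite discounted MDP with rewards r and transitions P. Let J̃ : S → ℝ satisfy J̃ ≥ T J̃ componentwise, let ũ be the one-step lookahead (greedy) policy with respect to J̃, let J_ũ be the value function of ũ, and let J* be the optimal value function. Then for any probability distribution ν on S, ν^T (J* − J_ũ) ≤ (1/(1−α)) · F_α(ν,ũ)^T (J̃ − J*), where F_α(ν,ũ) = (1−α) ν^T (I − α P_ũ)^{-1} is the (normalized) discounted state occupation measure of policy ũ starting from ν. -/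
theorem adp_performance_bound {S A : Type*} [Fintype S] [DecidableEq S] [Nonempty S]
    [Fintype A] [Nonempty A]
    (α : ℝ) (hα : α ∈ Set.Ioo (0 : ℝ) 1)
    (r : S → A → ℝ) (P : S → A → S → ℝ)
    (hP0 : ∀ s a s', 0 ≤ P s a s') (hP1 : ∀ s a, ∑ s', P s a s' = 1)
    (T : (S → ℝ) → (S → ℝ))
    (hT : ∀ J s, T J s = Finset.univ.sup' Finset.univ_nonempty
        (fun a => r s a + α * ∑ s', P s a s' * J s'))
    (Jt : S → ℝ) (hfeas : ∀ s, T Jt s ≤ Jt s)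
    (u : S → A)
    (hu : ∀ s, r s (u s) + α * ∑ s', P s (u s) s' * Jt s' = T Jt s)
    (Pu : Matrix S S ℝ) (hPu : ∀ s s', Pu s s' = P s (u s) s')
    (Ju : S → ℝ)
    (hJu : ∀ s, Ju s = r s (u s) + α * ∑ s', Pu s s' * Ju s')
    (Jstar : S → ℝ) (hJstar : ∀ s, Jstar s = T Jstar s)
    (ν : S → ℝ) (hν0 : ∀ s, 0 ≤ ν s) (hν1 : ∑ s, ν s = 1)
    (F : S → ℝ)
    (hF : ∀ s, F s = (1 - α) * ∑ s', ν s' * (1 - α • Pu)⁻¹ s' s) :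
    ∑ s, ν s * (Jstar s - Ju s) ≤ (1 / (1 - α)) * ∑ s, F s * (Jt s - Jstar s) := by
  obtain ⟨hα0, hα1⟩ := hα
  have h1α : (0:ℝ) < 1 - α := by linarith
  have hPu0 : ∀ s s', 0 ≤ Pu s s' := fun s s' => (hPu s s') ▸ hP0 s (u s) s'
  have hPu1 : ∀ s, ∑ s', Pu s s' = 1 := by
    intro s; simp only [hPu]; exact hP1 s (u s)
  -- Step 1 : Jstar ≤ Jt
  have hJle : ∀ s, Jstar s ≤ Jt s := by
    obtain ⟨s₀, -, hmax⟩ := Finset.exists_max_image Finset.univ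
      (fun s => Jstar s - Jt s) ⟨Classical.arbitrary S, Finset.mem_univ _⟩
    have hmax' : ∀ s, Jstar s - Jt s ≤ Jstar s₀ - Jt s₀ := fun s => hmax s (Finset.mem_univ s)
    set d := Jstar s₀ - Jt s₀ with hd
    have hd0 : d ≤ 0 := by
      rcases le_or_gt d 0 with h | h
      · exact h
      · -- contraction argument
        have hTT : T Jstar s₀ ≤ T Jt s₀ + α * d := by
          rw [hT, hT]
          apply Finset.sup'_le
          intro a _
          have hsum : ∑ s', P s₀ a s' * Jstar s' ≤ (∑ s', P s₀ a s' * Jt s') + d := by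
            have : ∑ s', P s₀ a s' * Jstar s' - ∑ s', P s₀ a s' * Jt s'
                = ∑ s', P s₀ a s' * (Jstar s' - Jt s') := by
              rw [← Finset.sum_sub_distrib]; apply Finset.sum_congr rfl; intros; ring
            have hle : ∑ s', P s₀ a s' * (Jstar s' - Jt s') ≤ ∑ s', P s₀ a s' * d := by
              apply Finset.sum_le_sum
              intro i _
              exact mul_le_mul_of_nonneg_left (hmax' i) (hP0 s₀ a i)
            rw [← Finset.sum_mul, hP1 s₀ a, one_mul] at hle
            linarith [this ▸ hle]
          have hle2 : r s₀ a + α * ∑ s', P s₀ a s' * Jt s'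
              ≤ Finset.univ.sup' Finset.univ_nonempty
                (fun a => r s₀ a + α * ∑ s', P s₀ a s' * Jt s') :=
            Finset.le_sup' (fun a => r s₀ a + α * ∑ s', P s₀ a s' * Jt s') (Finset.mem_univ a)
          nlinarith [hsum]
        have h1 : Jstar s₀ ≤ Jt s₀ + α * d := by
          have := hfeas s₀
          rw [hJstar s₀]
          linarith
        nlinarith
    intro s
    have := hmax' s
    linarith
  -- Step 2 : Jstar ≤ T Jt
  have hJsT : ∀ s, Jstar s ≤ T Jt s := by
    intro s
    rw [hJstar s, hT, hT]
    apply Finset.sup'_le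
    intro a _
    have hsum : ∑ s', P s a s' * Jstar s' ≤ ∑ s', P s a s' * Jt s' := by
      apply Finset.sum_le_sum
      intro i _
      exact mul_le_mul_of_nonneg_left (hJle i) (hP0 s a i)
    have hle2 : r s a + α * ∑ s', P s a s' * Jt s'
        ≤ Finset.univ.sup' Finset.univ_nonempty
          (fun a => r s a + α * ∑ s', P s a s' * Jt s') :=
      Finset.le_sup' (fun a => r s a + α * ∑ s', P s a s' * Jt s') (Finset.mem_univ a)
    nlinarith
  -- matrix B and its mulVec formula
  set B : Matrix S S ℝ := 1 - α • Pu with hB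
  have hBv : ∀ (v : S → ℝ) (s : S), B.mulVec v s = v s - α * ∑ k, Pu s k * v k := by
    intro v s
    simp only [hB, Matrix.mulVec, dotProduct, Matrix.sub_apply, Matrix.one_apply,
      Matrix.smul_apply, smul_eq_mul, sub_mul, ite_mul, one_mul, zero_mul,
      Finset.sum_sub_distrib, Finset.sum_ite_eq, Finset.mem_univ, if_true]
    rw [Finset.mul_sum]
    congr 1
    apply Finset.sum_congr rfl
    intros; ring
  -- Step 3 : B is nonsingular
  have hdet : B.det ≠ 0 := by
    intro h
    rw [← Matrix.exists_mulVec_eq_zero_iff] at h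
    obtain ⟨v, hv, hv0⟩ := h
    obtain ⟨s₀, -, hmax⟩ := Finset.exists_max_image Finset.univ
      (fun s => |v s|) ⟨Classical.arbitrary S, Finset.mem_univ _⟩
    have hvs : v s₀ - α * ∑ k, Pu s₀ k * v k = 0 := by
      have := congrFun hv0 s₀
      rwa [hBv] at this
    have hbound : |∑ k, Pu s₀ k * v k| ≤ |v s₀| := by
      calc |∑ k, Pu s₀ k * v k| ≤ ∑ k, |Pu s₀ k * v k| := Finset.abs_sum_le_sum_abs _ _
        _ ≤ ∑ k, Pu s₀ k * |v s₀| := by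
            apply Finset.sum_le_sum
            intro i _
            rw [abs_mul, abs_of_nonneg (hPu0 s₀ i)]
            exact mul_le_mul_of_nonneg_left (hmax i (Finset.mem_univ i)) (hPu0 s₀ i)
        _ = |v s₀| := by rw [← Finset.sum_mul, hPu1 s₀, one_mul]
    have habs : |v s₀| ≤ α * |v s₀| := by
      have h1 : |v s₀| = α * |∑ k, Pu s₀ k * v k| := by
        have hh : v s₀ = α * ∑ k, Pu s₀ k * v k := by linarith
        rw [hh, abs_mul, abs_of_pos hα0]
      calc |v s₀| = α * |∑ k, Pu s₀ k * v k| := h1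
        _ ≤ α * |v s₀| := mul_le_mul_of_nonneg_left hbound (le_of_lt hα0)
    have hz : v s₀ = 0 := by
      have : |v s₀| ≤ 0 := by nlinarith [abs_nonneg (v s₀)]
      simpa [abs_nonpos_iff] using le_antisymm this (abs_nonneg _)
    apply hv
    funext s
    have h2 := hmax s (Finset.mem_univ s)
    rw [hz, abs_zero] at h2
    simpa using abs_nonpos_iff.mp h2
  have hdetU : IsUnit B.det := isUnit_iff_ne_zero.mpr hdet
  set M : Matrix S S ℝ := B⁻¹ with hM
  have hBM : B * M = 1 := Matrix.mul_nonsing_inv B hdetU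
  have hMB : M * B = 1 := Matrix.nonsing_inv_mul B hdetU
  -- Step 4 : entries of M are nonnegative
  have hM0 : ∀ s c, 0 ≤ M s c := by
    intro s c
    set x : S → ℝ := fun k => M k c with hx
    have hcol : ∀ t, x t - α * ∑ k, Pu t k * x k = if t = c then 1 else 0 := by
      intro t
      have h1 : B.mulVec x t = (B * M) t c := by
        simp only [Matrix.mulVec, dotProduct, Matrix.mul_apply, hx]
      rw [hBv, hBM, Matrix.one_apply] at h1
      exact h1
    obtain ⟨s₀, -, hmin⟩ := Finset.exists_min_image Finset.univ x
      ⟨Classical.arbitrary S, Finset.mem_univ _⟩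
    have hx0 : 0 ≤ x s₀ := by
      have h1 := hcol s₀
      have h2 : x s₀ ≥ (if s₀ = c then (1:ℝ) else 0) + α * x s₀ := by
        have hsum : ∑ k, Pu s₀ k * x k ≥ ∑ k, Pu s₀ k * x s₀ := by
          apply Finset.sum_le_sum
          intro i _
          exact mul_le_mul_of_nonneg_left (hmin i (Finset.mem_univ i)) (hPu0 s₀ i)
        rw [← Finset.sum_mul, hPu1 s₀, one_mul] at hsum
        nlinarith
      by_cases h : s₀ = c
      · rw [if_pos h] at h2; nlinarith
      · rw [if_neg h] at h2; nlinarith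
    exact le_trans hx0 (hmin s (Finset.mem_univ s))
  -- Step 5 : Jt - Ju = M.mulVec (Jt - T Jt)
  have hBdiff : B.mulVec (fun s => Jt s - Ju s) = fun s => Jt s - T Jt s := by
    funext s
    rw [hBv]
    have h1 : ∑ k, Pu s k * (Jt k - Ju k) = (∑ k, Pu s k * Jt k) - ∑ k, Pu s k * Ju k := by
      rw [← Finset.sum_sub_distrib]; apply Finset.sum_congr rfl; intros; ring
    have h2 : α * ∑ k, Pu s k * Jt k = T Jt s - r s (u s) := by
      have := hu s
      simp only [hPu]
      linarith
    have h3 : α * ∑ k, Pu s k * Ju k = Ju s - r s (u s) := by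
      have := hJu s
      linarith
    rw [h1]
    ring_nf
    nlinarith [h2, h3]
  have hdiff : (fun s => Jt s - Ju s) = M.mulVec (fun s => Jt s - T Jt s) := by
    rw [← hBdiff, Matrix.mulVec_mulVec, hMB, Matrix.one_mulVec]
  -- Step 6 : final computation
  have hF0 : ∀ s, 0 ≤ F s := by
    intro s
    rw [hF]
    apply mul_nonneg (le_of_lt h1α)
    apply Finset.sum_nonneg
    intro i _
    exact mul_nonneg (hν0 i) (hM0 i s)
  have key : ∑ s, ν s * (Jt s - Ju s) = (1 / (1 - α)) * ∑ k, F k * (Jt k - T Jt k) := by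
    have h1 : ∑ s, ν s * (Jt s - Ju s)
        = ∑ s, ν s * ∑ k, M s k * (Jt k - T Jt k) := by
      apply Finset.sum_congr rfl
      intro s _
      have hs : Jt s - Ju s = ∑ k, M s k * (Jt k - T Jt k) := by
        have := congrFun hdiff s
        simpa [Matrix.mulVec, dotProduct] using this
      rw [hs]
    rw [h1]
    have h2 : ∑ s, ν s * ∑ k, M s k * (Jt k - T Jt k)
        = ∑ k, (∑ s, ν s * M s k) * (Jt k - T Jt k) := by
      simp_rw [Finset.mul_sum, Finset.sum_mul]
      rw [Finset.sum_comm]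
      apply Finset.sum_congr rfl; intros; apply Finset.sum_congr rfl; intros; ring
    rw [h2, Finset.mul_sum]
    apply Finset.sum_congr rfl
    intro k _
    rw [hF]
    field_simp
  have hterm : ∑ k, F k * (Jt k - T Jt k) ≤ ∑ k, F k * (Jt k - Jstar k) := by
    apply Finset.sum_le_sum
    intro i _
    apply mul_le_mul_of_nonneg_left _ (hF0 i)
    have := hJsT i
    linarith
  have hsplit : ∑ s, ν s * (Jstar s - Ju s)
      = (∑ s, ν s * (Jstar s - Jt s)) + ∑ s, ν s * (Jt s - Ju s) := by
    rw [← Finset.sum_add_distrib]; apply Finset.sum_congr rfl; intros; ring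
  have hneg : ∑ s, ν s * (Jstar s - Jt s) ≤ 0 := by
    apply Finset.sum_nonpos
    intro i _
    apply mul_nonpos_of_nonneg_of_nonpos (hν0 i)
    linarith [hJle i]
  rw [hsplit, key]
  have hmul : (1 / (1 - α)) * ∑ k, F k * (Jt k - T Jt k)
      ≤ (1 / (1 - α)) * ∑ s, F s * (Jt s - Jstar s) :=
    mul_le_mul_of_nonneg_left hterm (by positivity)
  linarith
end

section
/- Let S be a finite state space, α ∈ (0,1), T the Bellman optimality operator of a finite discounted MDP with value function J* (fixed point of T), and ũ a stationary policy with T_ũ J̃ = T J̃ for some J̃ ≥ T J̃. Then J* − J_ũ ≤ (I − α P_ũ)^{-1} [ (T J̃ − T J*) + α P_ũ (J̃ − J*) ] componentwise, and consequently J* − J_ũ ≤ 2 α (I − α P_ũ)^{-1} P_ũ (J̃ − J*) whenever J̃ ≥ J* and T J̃ − T J* ≤ α P_ũ (J̃ − J*). -/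
open Finset Matrix

/-- Key monotonicity lemma: if `(1 - α•Pu).mulVec x ≥ 0` componentwise, then `x ≥ 0`. -/
lemma keyA {S : Type*} [Fintype S] [DecidableEq S]
    (α : ℝ) (hα0 : 0 < α) (hα1 : α < 1)
    (Pu : Matrix S S ℝ) (hP0 : ∀ s s', 0 ≤ Pu s s') (hP1 : ∀ s, ∑ s', Pu s s' = 1)
    (x : S → ℝ) (h : ∀ s, 0 ≤ ((1 - α • Pu).mulVec x) s) : ∀ s, 0 ≤ x s := by
  intro s
  have hne : (Finset.univ : Finset S).Nonempty := ⟨s, Finset.mem_univ s⟩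
  obtain ⟨s0, -, hmin⟩ := Finset.exists_min_image Finset.univ x hne
  have hmin' : ∀ s', x s0 ≤ x s' := fun s' => hmin s' (Finset.mem_univ s')
  have h0 := h s0
  have hexp : ((1 - α • Pu).mulVec x) s0 = x s0 - α * ∑ s', Pu s0 s' * x s' := by
    simp [Matrix.mulVec, dotProduct, Matrix.sub_apply, Matrix.smul_apply,
      Matrix.one_apply, sub_mul, ite_mul, Finset.sum_sub_distrib, Finset.mul_sum, mul_assoc]
  have hsum : (x s0) ≤ ∑ s', Pu s0 s' * x s' := by
    calc x s0 = ∑ s', Pu s0 s' * x s0 := by rw [← Finset.sum_mul, hP1, one_mul]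
    _ ≤ ∑ s', Pu s0 s' * x s' :=
      Finset.sum_le_sum fun s' _ => mul_le_mul_of_nonneg_left (hmin' s') (hP0 s0 s')
  rw [hexp] at h0
  have hs0 : 0 ≤ x s0 := by nlinarith
  exact le_trans hs0 (hmin' s)

theorem adp_componentwise_bounds {S A : Type*} [Fintype S] [DecidableEq S]
    [Fintype A] [Nonempty A]
    (α : ℝ) (hα : α ∈ Set.Ioo (0 : ℝ) 1)
    (r : S → A → ℝ) (P : S → A → S → ℝ)
    (hP0 : ∀ s a s', 0 ≤ P s a s') (hP1 : ∀ s a, ∑ s', P s a s' = 1)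
    (T : (S → ℝ) → (S → ℝ))
    (hT : ∀ J s, T J s = Finset.univ.sup' Finset.univ_nonempty
        (fun a => r s a + α * ∑ s', P s a s' * J s'))
    (u : S → A) (Pu : Matrix S S ℝ) (hPu : ∀ s s', Pu s s' = P s (u s) s')
    (Ju : S → ℝ)
    (hJu : ∀ s, Ju s = r s (u s) + α * ∑ s', Pu s s' * Ju s')
    (Jstar : S → ℝ) (hJstar : ∀ s, Jstar s = T Jstar s)
    (Jt : S → ℝ) (hfeas : ∀ s, T Jt s ≤ Jt s)
    (hu : ∀ s, r s (u s) + α * ∑ s', Pu s s' * Jt s' = T Jt s) :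
    (∀ s, Jstar s - Ju s ≤
        ((1 - α • Pu)⁻¹).mulVec
          (fun s' => (T Jt s' - T Jstar s') + α * (Pu.mulVec (Jt - Jstar)) s') s) ∧
    ((∀ s, Jstar s ≤ Jt s) →
      (∀ s, T Jt s - T Jstar s ≤ α * (Pu.mulVec (Jt - Jstar)) s) →
      ∀ s, Jstar s - Ju s ≤ 2 * α * (((1 - α • Pu)⁻¹ * Pu).mulVec (Jt - Jstar)) s) := by
  obtain ⟨hα0, hα1⟩ := hα
  set M : Matrix S S ℝ := 1 - α • Pu with hM
  have hPu0 : ∀ s s', 0 ≤ Pu s s' := fun s s' => (hPu s s') ▸ hP0 s (u s) s'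
  have hPu1 : ∀ s, ∑ s', Pu s s' = 1 := fun s => by
    simp only [hPu]; exact hP1 s (u s)
  have key := keyA α hα0 hα1 Pu hPu0 hPu1
  -- M is a unit
  have hinj : Function.Injective M.mulVec := by
    intro a b hab
    have hz : M.mulVec (a - b) = 0 := by
      have := (M.mulVecLin).map_sub a b
      simp only [Matrix.coe_mulVecLin] at this
      rw [this, hab, sub_self]
    have h1 : ∀ s, 0 ≤ (a - b) s := key (a - b) (fun s => by rw [hz]; simp)
    have h2 : ∀ s, 0 ≤ (b - a) s := by
      apply key
      intro s
      have : M.mulVec (b - a) = 0 := by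
        have := (M.mulVecLin).map_sub b a
        simp only [Matrix.coe_mulVecLin] at this
        rw [this, hab, sub_self]
      rw [this]; simp
    funext s
    have ha := h1 s
    have hb := h2 s
    simp only [Pi.sub_apply] at ha hb
    linarith
  have hUnit : IsUnit M := Matrix.mulVec_injective_iff_isUnit.mp hinj
  have hMinv : M * M⁻¹ = 1 := Matrix.mul_nonsing_inv M (Matrix.isUnit_iff_isUnit_det M |>.mp hUnit)
  -- monotonicity machinery for T
  have hTmono : ∀ (J J' : S → ℝ), (∀ s, J' s ≤ J s) → ∀ s, T J' s ≤ T J s := by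
    intro J J' hle s
    rw [hT, hT]
    apply Finset.sup'_le
    intro a _
    refine le_trans ?_ (Finset.le_sup' _ (Finset.mem_univ a))
    have : ∑ s', P s a s' * J' s' ≤ ∑ s', P s a s' * J s' :=
      Finset.sum_le_sum fun s' _ => mul_le_mul_of_nonneg_left (hle s') (hP0 s a s')
    nlinarith
  -- T is "almost a contraction from below": T J s - T J' s ≥ α * min (J - J')
  have hJtJstar : ∀ s, Jstar s ≤ Jt s := by
    intro s
    have hne : (Finset.univ : Finset S).Nonempty := ⟨s, Finset.mem_univ s⟩
    obtain ⟨s0, -, hmin⟩ := Finset.exists_min_image Finset.univ (fun s => Jt s - Jstar s) hne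
    have hmin' : ∀ s', Jt s0 - Jstar s0 ≤ Jt s' - Jstar s' := fun s' => hmin s' (Finset.mem_univ s')
    -- T Jt s0 - T Jstar s0 ≥ α * (Jt s0 - Jstar s0)
    have hcontr : α * (Jt s0 - Jstar s0) ≤ T Jt s0 - T Jstar s0 := by
      rw [hT, hT]
      obtain ⟨a0, -, ha0⟩ := Finset.exists_mem_eq_sup' (Finset.univ_nonempty (α := A))
        (fun a => r s0 a + α * ∑ s', P s0 a s' * Jstar s')
      have hle : Finset.univ.sup' Finset.univ_nonempty
          (fun a => r s0 a + α * ∑ s', P s0 a s' * Jstar s')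
          = r s0 a0 + α * ∑ s', P s0 a0 s' * Jstar s' := ha0
      rw [hle]
      have h1 : r s0 a0 + α * ∑ s', P s0 a0 s' * Jt s' ≤
          Finset.univ.sup' Finset.univ_nonempty
            (fun a => r s0 a + α * ∑ s', P s0 a s' * Jt s') :=
        Finset.le_sup' (fun a => r s0 a + α * ∑ s', P s0 a s' * Jt s') (Finset.mem_univ a0)
      have h2 : α * (Jt s0 - Jstar s0) ≤
          α * ∑ s', P s0 a0 s' * Jt s' - α * ∑ s', P s0 a0 s' * Jstar s' := by
        rw [← mul_sub, ← Finset.sum_sub_distrib]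
        apply mul_le_mul_of_nonneg_left _ (le_of_lt hα0)
        calc Jt s0 - Jstar s0 = ∑ s', P s0 a0 s' * (Jt s0 - Jstar s0) := by
              rw [← Finset.sum_mul, hP1, one_mul]
        _ ≤ ∑ s', (P s0 a0 s' * Jt s' - P s0 a0 s' * Jstar s') := by
          apply Finset.sum_le_sum
          intro s' _
          rw [← mul_sub]
          exact mul_le_mul_of_nonneg_left (hmin' s') (hP0 s0 a0 s')
      linarith
    have hs0 : 0 ≤ Jt s0 - Jstar s0 := by
      have h1 : T Jt s0 ≤ Jt s0 := hfeas s0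
      have h2 : T Jstar s0 = Jstar s0 := (hJstar s0).symm
      nlinarith
    linarith [hmin' s]
  have hTJtJstar : ∀ s, T Jstar s ≤ T Jt s := hTmono Jt Jstar hJtJstar
  -- The core inequality: M.mulVec (Jstar - Ju) ≤ f
  set g : S → ℝ := fun s => Jstar s - Ju s with hg
  set f : S → ℝ := fun s' => (T Jt s' - T Jstar s') + α * (Pu.mulVec (Jt - Jstar)) s' with hf
  have hMg : ∀ s, (M.mulVec g) s = (T Jstar s - T Jt s) + α * (Pu.mulVec (Jt - Jstar)) s := by
    intro s
    have hexp : (M.mulVec g) s = g s - α * ∑ s', Pu s s' * g s' := by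
      simp [hM, Matrix.mulVec, dotProduct, Matrix.sub_apply, Matrix.smul_apply,
        Matrix.one_apply, sub_mul, ite_mul, Finset.sum_sub_distrib, Finset.mul_sum, mul_assoc]
    rw [hexp]
    have hmv : (Pu.mulVec (Jt - Jstar)) s = ∑ s', Pu s s' * (Jt s' - Jstar s') := by
      simp [Matrix.mulVec, dotProduct]
    rw [hmv, hg]
    simp only
    have hru : r s (u s) = T Jt s - α * ∑ s', Pu s s' * Jt s' := by linarith [hu s]
    have hJu' := hJu s
    have hJs' := hJstar s
    have e1 : ∑ s', Pu s s' * (Jstar s' - Ju s') =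
        ∑ s', Pu s s' * Jstar s' - ∑ s', Pu s s' * Ju s' := by
      rw [← Finset.sum_sub_distrib]; congr 1; funext s'; ring
    have e2 : ∑ s', Pu s s' * (Jt s' - Jstar s') =
        ∑ s', Pu s s' * Jt s' - ∑ s', Pu s s' * Jstar s' := by
      rw [← Finset.sum_sub_distrib]; congr 1; funext s'; ring
    rw [e1, e2]
    linarith [mul_comm α (∑ s', Pu s s' * Jstar s')]
  have hMgf : ∀ s, (M.mulVec g) s ≤ f s := by
    intro s
    rw [hMg s, hf]
    simp only
    linarith [hTJtJstar s]
  -- general: M.mulVec g ≤ y componentwise → g ≤ M⁻¹.mulVec y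
  have main : ∀ y : S → ℝ, (∀ s, (M.mulVec g) s ≤ y s) → ∀ s, g s ≤ (M⁻¹.mulVec y) s := by
    intro y hy s
    have h0 : ∀ s, 0 ≤ ((M⁻¹.mulVec y) - g) s := by
      apply key
      intro t
      have : M.mulVec (M⁻¹.mulVec y - g) = fun t => y t - (M.mulVec g) t := by
        have hlin := (M.mulVecLin).map_sub (M⁻¹.mulVec y) g
        simp only [Matrix.coe_mulVecLin] at hlin
        rw [hlin, Matrix.mulVec_mulVec, hMinv, Matrix.one_mulVec]
        rfl
      rw [this]
      simp only
      linarith [hy t]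
    have := h0 s
    simp only [Pi.sub_apply] at this
    linarith
  constructor
  · intro s
    exact main f hMgf s
  · intro hJs hTb s
    have hy : ∀ t, (M.mulVec g) t ≤ (fun t => 2 * α * (Pu.mulVec (Jt - Jstar)) t) t := by
      intro t
      have h1 := hMgf t
      have h2 := hTb t
      simp only [hf] at h1
      simp only
      linarith
    have hres := main _ hy s
    have heq : (M⁻¹.mulVec (fun t => 2 * α * (Pu.mulVec (Jt - Jstar)) t)) s
        = 2 * α * (((M⁻¹) * Pu).mulVec (Jt - Jstar)) s := by
      rw [← Matrix.mulVec_mulVec]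
      have : (fun t => 2 * α * (Pu.mulVec (Jt - Jstar)) t)
          = (2 * α) • (Pu.mulVec (Jt - Jstar)) := by
        funext t; simp [smul_eq_mul]
      rw [this, Matrix.mulVec_smul]
      simp [smul_eq_mul]
    rw [heq] at hres
    exact hres
end
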